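/- arXiv:1103.2717 — 6 statements merged into one kernel-verified Lean document; each statement's English description precedes it below -/
import Mathlib

section
/- Chio's determinant identity: Let R be an integral domain, let n ≥ 2, and let A = (a_{i,j}) be an n×n matrix over R. Define the Chio condensate of A with pivot a_{n,n} to be the (n−1)×(n−1) matrix C(A) whose (i,j) entry is the 2×2 determinant a_{i,j}·a_{n,n} − a_{i,n}·a_{n,j}, for 1 ≤ i,j ≤ n−1. Then det(C(A)) = a_{n,n}^{n−2} · det(A). -/
/-!
Write a for the pivot a_{n,n}. Multiplying A on the left by the matrix that scales each of the first
n - 1 rows by a and subtracts a_{i,n} times the last row from row i clears the last column above the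
pivot and leaves C(A) as the top-left block, so a * det C(A) = a ^ (n - 1) * det A over every
commutative ring. Cancelling a is legitimate for the generic matrix of indeterminates over ℤ, and
the identity for the generic matrix specializes to every matrix.
-/

open Matrix

namespace Matrix

variable {m R : Type*} [Fintype m] [DecidableEq m] [CommRing R]

theorem pivot_mul_det_smul_sub_vecMulVec (B : Matrix m m R) (u v : m → R) (a : R) :
    a * (a • B - vecMulVec u v).det =
      a ^ Fintype.card m *
        (fromBlocks B (replicateCol (Fin 1) u) (replicateRow (Fin 1) v) (of fun _ _ => a)).det := by
  set L : Matrix (m ⊕ Fin 1) (m ⊕ Fin 1) R := fromBlocks (a • 1) (-replicateCol (Fin 1) u) 0 1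
  have hL : L.det = a ^ Fintype.card m := by simp [L]
  have hLM : L * fromBlocks B (replicateCol (Fin 1) u) (replicateRow (Fin 1) v) (of fun _ _ => a) =
      fromBlocks (a • B - vecMulVec u v) 0 (replicateRow (Fin 1) v) (of fun _ _ => a) := by
    simp only [L, fromBlocks_multiply, smul_mul, Matrix.one_mul, Matrix.neg_mul, Matrix.zero_mul,
      zero_add, ← sub_eq_add_neg, vecMulVec_eq (Fin 1)]
    congr 1
    ext i j
    simp [mul_apply, mul_comm]
  rw [← hL, ← det_mul, hLM, det_fromBlocks_zero₁₂, det_unique (of fun _ _ => a), mul_comm]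
  rfl

variable {n : ℕ}

def chioCondensate (A : Matrix (Fin (n + 2)) (Fin (n + 2)) R) :
    Matrix (Fin (n + 1)) (Fin (n + 1)) R :=
  of fun i j => A i.castSucc j.castSucc * A (Fin.last _) (Fin.last _) -
    A i.castSucc (Fin.last _) * A (Fin.last _) j.castSucc

theorem chioCondensate_eq_smul_sub_vecMulVec (A : Matrix (Fin (n + 2)) (Fin (n + 2)) R) :
    chioCondensate A = A (Fin.last _) (Fin.last _) • A.submatrix Fin.castSucc Fin.castSucc -
      vecMulVec (fun i => A i.castSucc (Fin.last _)) (fun j => A (Fin.last _) j.castSucc) := by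
  ext i j
  simp [chioCondensate, vecMulVec_apply, mul_comm]

theorem submatrix_finSumFinEquiv_eq_fromBlocks {α : Type*}
    (A : Matrix (Fin (n + 2)) (Fin (n + 2)) α) :
    A.submatrix (finSumFinEquiv (m := n + 1) (n := 1)) (finSumFinEquiv (m := n + 1) (n := 1)) =
      fromBlocks (A.submatrix Fin.castSucc Fin.castSucc)
        (replicateCol (Fin 1) fun i => A i.castSucc (Fin.last _))
        (replicateRow (Fin 1) fun j => A (Fin.last _) j.castSucc)
        (of fun _ _ => A (Fin.last _) (Fin.last _)) := by
  ext (i | i) (j | j) <;> simp [Fin.fin_one_eq_zero] <;> rfl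

theorem pivot_mul_det_chioCondensate (A : Matrix (Fin (n + 2)) (Fin (n + 2)) R) :
    A (Fin.last _) (Fin.last _) * (chioCondensate A).det =
      A (Fin.last _) (Fin.last _) ^ (n + 1) * A.det := by
  rw [chioCondensate_eq_smul_sub_vecMulVec, pivot_mul_det_smul_sub_vecMulVec, Fintype.card_fin,
    ← submatrix_finSumFinEquiv_eq_fromBlocks, det_submatrix_equiv_self]

theorem det_chioCondensate_of_pivot_ne_zero [IsDomain R]
    (A : Matrix (Fin (n + 2)) (Fin (n + 2)) R) (h : A (Fin.last _) (Fin.last _) ≠ 0) :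
    (chioCondensate A).det = A (Fin.last _) (Fin.last _) ^ n * A.det :=
  mul_left_cancel₀ h <| by rw [pivot_mul_det_chioCondensate, pow_succ', mul_assoc]

theorem chioCondensate_mapMatrix {S : Type*} [CommRing S] (f : R →+* S)
    (A : Matrix (Fin (n + 2)) (Fin (n + 2)) R) :
    chioCondensate (f.mapMatrix A) = f.mapMatrix (chioCondensate A) := by
  ext i j
  simp [chioCondensate]

end Matrix

theorem chio_determinant_identity_general (R : Type*) [CommRing R] (n : ℕ)
    (A : Matrix (Fin (n + 2)) (Fin (n + 2)) R) :
    (Matrix.of fun (i : Fin (n + 1)) (j : Fin (n + 1)) =>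
        A i.castSucc j.castSucc * A (Fin.last (n + 1)) (Fin.last (n + 1)) -
          A i.castSucc (Fin.last (n + 1)) * A (Fin.last (n + 1)) j.castSucc).det =
      A (Fin.last (n + 1)) (Fin.last (n + 1)) ^ n * A.det := by
  let X := mvPolynomialX (Fin (n + 2)) (Fin (n + 2)) ℤ
  have hX : (chioCondensate X).det = X (Fin.last _) (Fin.last _) ^ n * X.det :=
    det_chioCondensate_of_pivot_ne_zero X (MvPolynomial.X_ne_zero _)
  let f := (MvPolynomial.aeval (R := ℤ) fun p : Fin (n + 2) × Fin (n + 2) => A p.1 p.2).toRingHom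
  have hA : f.mapMatrix X = A := mvPolynomialX_mapMatrix_aeval ℤ A
  show (chioCondensate A).det = _
  rw [← hA, chioCondensate_mapMatrix, ← RingHom.map_det, ← RingHom.map_det, hX]
  simp

/-- **Chio's determinant identity.** For an integral domain `R`, `n ≥ 2` (encoded as `n + 2`),
and an `(n+2) × (n+2)` matrix `A` over `R`, the determinant of the Chio condensate of `A`
with pivot `A (last) (last)` equals `A (last) (last) ^ n * det A`
(the exponent `n` is `(n+2) - 2`). -/
theorem chio_determinant_identity (R : Type*) [CommRing R] [IsDomain R] (n : ℕ)
    (A : Matrix (Fin (n + 2)) (Fin (n + 2)) R) :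
    (Matrix.of fun (i : Fin (n + 1)) (j : Fin (n + 1)) =>
        A i.castSucc j.castSucc * A (Fin.last (n + 1)) (Fin.last (n + 1)) -
          A i.castSucc (Fin.last (n + 1)) * A (Fin.last (n + 1)) j.castSucc).det =
      A (Fin.last (n + 1)) (Fin.last (n + 1)) ^ n * A.det :=
  chio_determinant_identity_general R n A
end

section
/- The parametrized covering lemma: Let s,t ≥ 2, let ∅ ⊆ I ⊆ J ⊆ {1,…,s−1}×{1,…,t−1}, let B : I → {−1,0,+1}, and set h(I,J) := |J̆| − |I| − |p1(I)| − |p2(I)|, where J̆ is the Chio extension of J. Then h(I,J) ≥ 1, and there exists a map Φ from the set {A : J̆ → {−1,+1} : A condenses to B} onto Col(X_B, σ_B) all of whose fibres have cardinality exactly 2^{h(I,J)}; in particular |{A : J̆ → {−1,+1} : A condenses to B}| = 2^{h(I,J)} · |Col(X_B, σ_B)|. -/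
/-!
Write `Ĭ°` (`pinnedCells`) for the Chio extension of `I` without its corner `(s,t)`. Once the
corner entry `a = A(s,t)` is fixed, the condensation identity
`A(i,j)·a − A(i,t)·A(s,j) = 2·B(i,j)` solves for `A(i,j) = a·(2·B(i,j) + A(i,t)·A(s,j))`, and
this is `±1` exactly when the pair `(A(i,t), A(s,j))` obeys the sign rule of the edge `(i,j)`
of `X_B`. Hence a condensing `A` is the same as a colouring of `X_B` (its values on the last row
and column of `Ĭ°`) together with arbitrary signs on the free cells `J̆ \ Ĭ°`, which contain
the corner; and `|J̆ \ Ĭ°| = |J̆| − |I| − |p1(I)| − |p2(I)|`.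
-/

/-- The grid of index positions `{1,…,s-1} × {1,…,t-1}`. -/
def mgrid (s t : ℕ) : Finset (ℕ × ℕ) := Finset.Icc 1 (s - 1) ×ˢ Finset.Icc 1 (t - 1)

/-- The Chio extension `J̆` of a set `J` of positions:
`J̆ = {(s,t)} ∪ {(i,t) : i ∈ p1(J)} ∪ {(s,j) : j ∈ p2(J)} ∪ J`. -/
def chioExt (s t : ℕ) (J : Finset (ℕ × ℕ)) : Finset (ℕ × ℕ) :=
  insert (s, t) (((J.image Prod.fst).image fun i => (i, t)) ∪
    ((J.image Prod.snd).image fun j => (s, j)) ∪ J)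

/-- `A` condenses to `B` on `I`:
`A(i,j)·A(s,t) − A(i,t)·A(s,j) = 2·B(i,j)` for every `(i,j) ∈ I`. -/
def CondensesTo (s t : ℕ) (I : Finset (ℕ × ℕ)) (A B : ℕ × ℕ → ℤ) : Prop :=
  ∀ p ∈ I, A p * A (s, t) - A (p.1, t) * A (s, p.2) = 2 * B p

/-- `A` encodes a function `E → {−1,+1}`: it takes values `±1` on `E` and is
normalized to `1` off `E`. -/
def IsSignOn (E : Finset (ℕ × ℕ)) (A : ℕ × ℕ → ℤ) : Prop :=
  (∀ p ∈ E, A p = 1 ∨ A p = -1) ∧ ∀ p ∉ E, A p = 1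

/-- First projection `p1(I)` of a set of positions. -/
def proj1 (I : Finset (ℕ × ℕ)) : Finset ℕ := I.image Prod.fst

/-- Second projection `p2(I)` of a set of positions. -/
def proj2 (I : Finset (ℕ × ℕ)) : Finset ℕ := I.image Prod.snd

/-- The vertex set of the bipartite graph `X_B`: a copy `Sum.inl i` of each row index
`i ∈ p1(I)` and a copy `Sum.inr j` of each column index `j ∈ p2(I)`. -/
def vertSet (I : Finset (ℕ × ℕ)) : Finset (ℕ ⊕ ℕ) :=
  (proj1 I).image Sum.inl ∪ (proj2 I).image Sum.inr

/-- `f0(X_B) = |p1(I)| + |p2(I)|`, the number of vertices of `X_B`. -/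
def fZero (I : Finset (ℕ × ℕ)) : ℕ := (proj1 I).card + (proj2 I).card

/-- `c` is a `(σ_B,−)`-constant, `(σ_B,+)`-proper vertex `2`-colouring of `X_B`, encoded as a
`±1`-valued function on the vertex set (normalized to `1` off the vertex set): endpoints of
`(−)`-edges get equal colours, endpoints of `(+)`-edges get different colours. -/
def IsGoodCol (I : Finset (ℕ × ℕ)) (B : ℕ × ℕ → ℤ) (c : ℕ ⊕ ℕ → ℤ) : Prop :=
  (∀ v ∈ vertSet I, c v = 1 ∨ c v = -1) ∧ (∀ v ∉ vertSet I, c v = 1) ∧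
    ∀ p ∈ I, (B p = -1 → c (Sum.inl p.1) = c (Sum.inr p.2)) ∧
      (B p = 1 → c (Sum.inl p.1) ≠ c (Sum.inr p.2))


lemma condensation_iff {a x y z b : ℤ} (ha : a = 1 ∨ a = -1) :
    x * a - y * z = 2 * b ↔ x = a * (2 * b + y * z) := by
  rcases ha with rfl | rfl <;> constructor <;> intro h <;> linarith

lemma sign_rule_of_condensation {a x y z b : ℤ} (ha : a = 1 ∨ a = -1) (hx : x = 1 ∨ x = -1)
    (hy : y = 1 ∨ y = -1) (hz : z = 1 ∨ z = -1) (h : x * a - y * z = 2 * b) :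
    (b = -1 → y = z) ∧ (b = 1 → y ≠ z) := by
  rcases ha with rfl | rfl <;> rcases hx with rfl | rfl <;> rcases hy with rfl | rfl <;>
    rcases hz with rfl | rfl <;> omega

lemma condensed_entry_eq_one_or {a y z b : ℤ} (ha : a = 1 ∨ a = -1) (hy : y = 1 ∨ y = -1)
    (hz : z = 1 ∨ z = -1) (hb : b = -1 ∨ b = 0 ∨ b = 1) (hneg : b = -1 → y = z)
    (hpos : b = 1 → y ≠ z) :
    a * (2 * b + y * z) = 1 ∨ a * (2 * b + y * z) = -1 := by
  rcases ha with rfl | rfl <;> rcases hy with rfl | rfl <;> rcases hz with rfl | rfl <;> omega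

lemma IsSignOn.piecewise {E F : Finset (ℕ × ℕ)} {A : ℕ × ℕ → ℤ} (hA : IsSignOn E A)
    (hFE : F ⊆ E) : IsSignOn F (F.piecewise A 1) :=
  ⟨fun p hp => by simpa [hp] using hA.1 p (hFE hp), fun p hp => by simp [hp]⟩

lemma card_isSignOn (F : Finset (ℕ × ℕ)) :
    Nat.card {ε : ℕ × ℕ → ℤ // IsSignOn F ε} = 2 ^ F.card := by
  let e : {ε : ℕ × ℕ → ℤ // IsSignOn F ε} ≃ (F → Bool) :=
    { toFun := fun ε p => decide (ε.1 p = 1)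
      invFun := fun g => ⟨fun p => if h : p ∈ F then (if g ⟨p, h⟩ then 1 else -1) else 1,
        fun p hp => by by_cases hg : g ⟨p, hp⟩ <;> simp [hp, hg], fun p hp => by simp [hp]⟩
      left_inv := fun ε => Subtype.ext <| funext fun p => by
        by_cases h : p ∈ F
        · rcases ε.2.1 p h with h1 | h1 <;> simp [h, h1]
        · simp [h, ε.2.2 p h]
      right_inv := fun g => funext fun p => by by_cases hg : g p <;> simp [hg] }
  rw [Nat.card_congr e, Nat.card_eq_fintype_card, Fintype.card_fun, Fintype.card_coe,
    Fintype.card_bool]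

lemma ncard_fiber_fst_comp {α β γ : Type*} (e : α ≃ β × γ) (b : β) :
    ((fun a => (e a).1) ⁻¹' {b}).ncard = Nat.card γ := by
  have hfiber : (fun a => (e a).1) ⁻¹' {b} = e ⁻¹' ({b} ×ˢ Set.univ) := by ext; simp
  rw [hfiber, Set.ncard_preimage_of_injective_subset_range e.injective (by simp), Set.ncard_prod,
    Set.ncard_singleton, Set.ncard_univ, one_mul]

section
variable {s t : ℕ} {I J : Finset (ℕ × ℕ)} {B : ℕ × ℕ → ℤ} {A : ℕ × ℕ → ℤ}
  {c : ℕ ⊕ ℕ → ℤ} {ε : ℕ × ℕ → ℤ}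

lemma lt_of_mem_mgrid {p : ℕ × ℕ} (hp : p ∈ mgrid s t) : p.1 < s ∧ p.2 < t := by
  simp only [mgrid, Finset.mem_product, Finset.mem_Icc] at hp
  omega

lemma lt_of_mem_proj1 (hI : I ⊆ mgrid s t) {i : ℕ} (hi : i ∈ proj1 I) : i < s := by
  obtain ⟨p, hp, rfl⟩ := Finset.mem_image.mp hi
  exact (lt_of_mem_mgrid (hI hp)).1

lemma lt_of_mem_proj2 (hI : I ⊆ mgrid s t) {j : ℕ} (hj : j ∈ proj2 I) : j < t := by
  obtain ⟨p, hp, rfl⟩ := Finset.mem_image.mp hj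
  exact (lt_of_mem_mgrid (hI hp)).2

lemma mem_proj1_of_mem {p : ℕ × ℕ} (hp : p ∈ I) : p.1 ∈ proj1 I :=
  Finset.mem_image_of_mem _ hp

lemma mem_proj2_of_mem {p : ℕ × ℕ} (hp : p ∈ I) : p.2 ∈ proj2 I :=
  Finset.mem_image_of_mem _ hp

@[simp]
lemma inl_mem_vertSet {i : ℕ} : Sum.inl i ∈ vertSet I ↔ i ∈ proj1 I := by simp [vertSet]

@[simp]
lemma inr_mem_vertSet {j : ℕ} : Sum.inr j ∈ vertSet I ↔ j ∈ proj2 I := by simp [vertSet]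

def pinnedCells (s t : ℕ) (I : Finset (ℕ × ℕ)) : Finset (ℕ × ℕ) :=
  I ∪ (proj1 I).image (fun i => (i, t)) ∪ (proj2 I).image (fun j => (s, j))

def freeCells (s t : ℕ) (I J : Finset (ℕ × ℕ)) : Finset (ℕ × ℕ) :=
  chioExt s t J \ pinnedCells s t I

lemma mem_pinnedCells {p : ℕ × ℕ} :
    p ∈ pinnedCells s t I ↔
      p ∈ I ∨ (p.1 ∈ proj1 I ∧ p.2 = t) ∨ (p.1 = s ∧ p.2 ∈ proj2 I) := by
  obtain ⟨i, j⟩ := p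
  simp [pinnedCells, eq_comm, and_comm]

lemma card_pinnedCells (hI : I ⊆ mgrid s t) :
    (pinnedCells s t I).card = I.card + (proj1 I).card + (proj2 I).card := by
  have hrows : Disjoint I ((proj1 I).image fun i => (i, t)) := by
    simp only [Finset.disjoint_right, Finset.mem_image]
    rintro _ ⟨i, -, rfl⟩ hi
    exact (lt_of_mem_mgrid (hI hi)).2.ne rfl
  have hcols :
      Disjoint (I ∪ (proj1 I).image fun i => (i, t)) ((proj2 I).image fun j => (s, j)) := by
    simp only [Finset.disjoint_right, Finset.mem_image, Finset.mem_union]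
    rintro _ ⟨j, hj, rfl⟩ (hsj | ⟨i, hi, hij⟩)
    · exact (lt_of_mem_mgrid (hI hsj)).1.ne rfl
    · exact (lt_of_mem_proj1 hI hi).ne (Prod.ext_iff.mp hij).1
  rw [pinnedCells, Finset.card_union_of_disjoint hcols, Finset.card_union_of_disjoint hrows,
    Finset.card_image_of_injective _ (Prod.mk_left_injective t),
    Finset.card_image_of_injective _ (Prod.mk_right_injective s)]

lemma pinnedCells_subset_chioExt (hIJ : I ⊆ J) : pinnedCells s t I ⊆ chioExt s t J := by
  have h1 : proj1 I ⊆ proj1 J := Finset.image_subset_image hIJ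
  have h2 : proj2 I ⊆ proj2 J := Finset.image_subset_image hIJ
  intro p hp
  rw [mem_pinnedCells] at hp
  simp only [chioExt, Finset.mem_insert, Finset.mem_union]
  rcases hp with hp | ⟨hi, ht⟩ | ⟨hs, hj⟩
  · exact .inr (.inr (hIJ hp))
  · exact .inr (.inl (.inl (Finset.mem_image.mpr ⟨p.1, h1 hi, by rw [← ht]⟩)))
  · exact .inr (.inl (.inr (Finset.mem_image.mpr ⟨p.2, h2 hj, by rw [← hs]⟩)))

lemma corner_notMem_pinnedCells (hI : I ⊆ mgrid s t) : (s, t) ∉ pinnedCells s t I := by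
  simp only [mem_pinnedCells, and_true, true_and, not_or]
  exact ⟨fun h => (lt_of_mem_mgrid (hI h)).1.ne rfl, fun h => (lt_of_mem_proj1 hI h).ne rfl,
    fun h => (lt_of_mem_proj2 hI h).ne rfl⟩

lemma corner_mem_freeCells (hI : I ⊆ mgrid s t) : (s, t) ∈ freeCells s t I J :=
  Finset.mem_sdiff.mpr ⟨Finset.mem_insert_self _ _, corner_notMem_pinnedCells hI⟩

def frameColouring (s t : ℕ) (I : Finset (ℕ × ℕ)) (A : ℕ × ℕ → ℤ) : ℕ ⊕ ℕ → ℤ :=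
  (vertSet I).piecewise (Sum.elim (fun i => A (i, t)) (fun j => A (s, j))) 1

def assemble (s t : ℕ) (I : Finset (ℕ × ℕ)) (B : ℕ × ℕ → ℤ) (c : ℕ ⊕ ℕ → ℤ)
    (ε : ℕ × ℕ → ℤ) : ℕ × ℕ → ℤ := fun p =>
  if p ∈ I then ε (s, t) * (2 * B p + c (.inl p.1) * c (.inr p.2))
  else if p.1 ∈ proj1 I ∧ p.2 = t then c (.inl p.1)
  else if p.1 = s ∧ p.2 ∈ proj2 I then c (.inr p.2)
  else ε p

lemma frameColouring_inl {i : ℕ} (hi : i ∈ proj1 I) :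
    frameColouring s t I A (.inl i) = A (i, t) := by
  simp [frameColouring, hi]

lemma frameColouring_inr {j : ℕ} (hj : j ∈ proj2 I) :
    frameColouring s t I A (.inr j) = A (s, j) := by
  simp [frameColouring, hj]

lemma assemble_of_mem {p : ℕ × ℕ} (hp : p ∈ I) :
    assemble s t I B c ε p = ε (s, t) * (2 * B p + c (.inl p.1) * c (.inr p.2)) :=
  if_pos hp

lemma assemble_row (hI : I ⊆ mgrid s t) {i : ℕ} (hi : i ∈ proj1 I) :
    assemble s t I B c ε (i, t) = c (.inl i) := by
  have hrow : (i, t) ∉ I := fun h => (lt_of_mem_mgrid (hI h)).2.ne rfl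
  simp [assemble, hrow, hi]

lemma assemble_col (hI : I ⊆ mgrid s t) {j : ℕ} (hj : j ∈ proj2 I) :
    assemble s t I B c ε (s, j) = c (.inr j) := by
  have hcol : (s, j) ∉ I := fun h => (lt_of_mem_mgrid (hI h)).1.ne rfl
  have hs : s ∉ proj1 I := fun h => (lt_of_mem_proj1 hI h).ne rfl
  simp [assemble, hcol, hs, hj]

lemma assemble_of_notMem_pinnedCells {p : ℕ × ℕ} (hp : p ∉ pinnedCells s t I) :
    assemble s t I B c ε p = ε p := by
  simp only [mem_pinnedCells, not_or] at hp
  simp only [assemble, if_neg hp.1, if_neg hp.2.1, if_neg hp.2.2]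

lemma isGoodCol_frameColouring (hIJ : I ⊆ J) (hA : IsSignOn (chioExt s t J) A)
    (hAB : CondensesTo s t I A B) : IsGoodCol I B (frameColouring s t I A) := by
  have hpinned : ∀ p ∈ pinnedCells s t I, A p = 1 ∨ A p = -1 :=
    fun p hp => hA.1 p (pinnedCells_subset_chioExt hIJ hp)
  refine ⟨fun v hv => ?_, fun v hv => by simp [frameColouring, hv], fun p hp => ?_⟩
  · rcases v with i | j <;> simp only [inl_mem_vertSet, inr_mem_vertSet] at hv
    · rw [frameColouring_inl hv]
      exact hpinned _ (mem_pinnedCells.mpr (.inr (.inl ⟨hv, rfl⟩)))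
    · rw [frameColouring_inr hv]
      exact hpinned _ (mem_pinnedCells.mpr (.inr (.inr ⟨rfl, hv⟩)))
  · have hi := mem_proj1_of_mem hp
    have hj := mem_proj2_of_mem hp
    rw [frameColouring_inl hi, frameColouring_inr hj]
    exact sign_rule_of_condensation (hA.1 _ (Finset.mem_insert_self _ _))
      (hpinned p (mem_pinnedCells.mpr (.inl hp)))
      (hpinned _ (mem_pinnedCells.mpr (.inr (.inl ⟨hi, rfl⟩))))
      (hpinned _ (mem_pinnedCells.mpr (.inr (.inr ⟨rfl, hj⟩)))) (hAB p hp)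

lemma isSignOn_assemble (hI : I ⊆ mgrid s t) (hIJ : I ⊆ J)
    (hB : ∀ p ∈ I, B p = -1 ∨ B p = 0 ∨ B p = 1) (hc : IsGoodCol I B c)
    (hε : IsSignOn (freeCells s t I J) ε) : IsSignOn (chioExt s t J) (assemble s t I B c ε) := by
  refine ⟨fun p hp => ?_, fun p hp => ?_⟩
  · by_cases hpin : p ∈ pinnedCells s t I
    · obtain ⟨i, j⟩ := p
      rcases mem_pinnedCells.mp hpin with hpI | ⟨hi, rfl⟩ | ⟨rfl, hj⟩
      · rw [assemble_of_mem hpI]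
        exact condensed_entry_eq_one_or (hε.1 _ (corner_mem_freeCells hI))
          (hc.1 _ (inl_mem_vertSet.mpr (mem_proj1_of_mem hpI)))
          (hc.1 _ (inr_mem_vertSet.mpr (mem_proj2_of_mem hpI))) (hB _ hpI) (hc.2.2 _ hpI).1
          (hc.2.2 _ hpI).2
      · rw [assemble_row hI hi]
        exact hc.1 _ (inl_mem_vertSet.mpr hi)
      · rw [assemble_col hI hj]
        exact hc.1 _ (inr_mem_vertSet.mpr hj)
    · rw [assemble_of_notMem_pinnedCells hpin]
      exact hε.1 p (Finset.mem_sdiff.mpr ⟨hp, hpin⟩)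
  · rw [assemble_of_notMem_pinnedCells fun h => hp (pinnedCells_subset_chioExt hIJ h)]
    exact hε.2 p fun h => hp (Finset.mem_sdiff.mp h).1

lemma condensesTo_assemble (hI : I ⊆ mgrid s t) (hε : ε (s, t) = 1 ∨ ε (s, t) = -1) :
    CondensesTo s t I (assemble s t I B c ε) B := by
  intro p hp
  rw [assemble_of_mem hp, assemble_of_notMem_pinnedCells (corner_notMem_pinnedCells hI),
    assemble_row hI (mem_proj1_of_mem hp), assemble_col hI (mem_proj2_of_mem hp)]
  exact (condensation_iff hε).mpr rfl

lemma assemble_frameColouring (hI : I ⊆ mgrid s t) (hA : IsSignOn (chioExt s t J) A)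
    (hAB : CondensesTo s t I A B) :
    assemble s t I B (frameColouring s t I A) ((freeCells s t I J).piecewise A 1) = A := by
  funext p
  by_cases hpin : p ∈ pinnedCells s t I
  · obtain ⟨i, j⟩ := p
    rcases mem_pinnedCells.mp hpin with hp | ⟨hi, rfl⟩ | ⟨rfl, hj⟩
    · have hcorner : (s, t) ∈ freeCells s t I J := corner_mem_freeCells hI
      rw [assemble_of_mem hp, Finset.piecewise_eq_of_mem _ _ _ hcorner,
        frameColouring_inl (mem_proj1_of_mem hp), frameColouring_inr (mem_proj2_of_mem hp)]
      exact ((condensation_iff (hA.1 _ (Finset.mem_sdiff.mp hcorner).1)).mp (hAB _ hp)).symm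
    · rw [assemble_row hI hi, frameColouring_inl hi]
    · rw [assemble_col hI hj, frameColouring_inr hj]
  · rw [assemble_of_notMem_pinnedCells hpin]
    by_cases hp : p ∈ chioExt s t J
    · exact Finset.piecewise_eq_of_mem _ _ _ (Finset.mem_sdiff.mpr ⟨hp, hpin⟩)
    · have hpfree : p ∉ freeCells s t I J := fun h => hp (Finset.mem_sdiff.mp h).1
      rw [Finset.piecewise_eq_of_notMem _ _ _ hpfree, hA.2 p hp]
      rfl

lemma frameColouring_assemble (hI : I ⊆ mgrid s t) (hc : IsGoodCol I B c) :
    frameColouring s t I (assemble s t I B c ε) = c := by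
  funext v
  by_cases hv : v ∈ vertSet I
  · rcases v with i | j <;> simp only [inl_mem_vertSet, inr_mem_vertSet] at hv
    · rw [frameColouring_inl hv, assemble_row hI hv]
    · rw [frameColouring_inr hv, assemble_col hI hv]
  · rw [frameColouring, Finset.piecewise_eq_of_notMem _ _ _ hv, hc.2.1 v hv]
    rfl

lemma piecewise_assemble (hε : IsSignOn (freeCells s t I J) ε) :
    (freeCells s t I J).piecewise (assemble s t I B c ε) 1 = ε := by
  funext p
  by_cases hp : p ∈ freeCells s t I J
  · rw [Finset.piecewise_eq_of_mem _ _ _ hp,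
      assemble_of_notMem_pinnedCells (Finset.mem_sdiff.mp hp).2]
  · rw [Finset.piecewise_eq_of_notMem _ _ _ hp, hε.2 p hp]
    rfl

def condensingEquiv (hI : I ⊆ mgrid s t) (hIJ : I ⊆ J)
    (hB : ∀ p ∈ I, B p = -1 ∨ B p = 0 ∨ B p = 1) :
    {A : ℕ × ℕ → ℤ // IsSignOn (chioExt s t J) A ∧ CondensesTo s t I A B} ≃
      {c : ℕ ⊕ ℕ → ℤ // IsGoodCol I B c} ×
        {ε : ℕ × ℕ → ℤ // IsSignOn (freeCells s t I J) ε} where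
  toFun A := (⟨frameColouring s t I A, isGoodCol_frameColouring hIJ A.2.1 A.2.2⟩,
    ⟨_, A.2.1.piecewise Finset.sdiff_subset⟩)
  invFun x := ⟨assemble s t I B x.1 x.2, isSignOn_assemble hI hIJ hB x.1.2 x.2.2,
    condensesTo_assemble hI (x.2.2.1 _ (corner_mem_freeCells hI))⟩
  left_inv A := Subtype.ext (assemble_frameColouring hI A.2.1 A.2.2)
  right_inv x := Prod.ext (Subtype.ext (frameColouring_assemble hI x.1.2))
    (Subtype.ext (piecewise_assemble x.2.2))

end

theorem parametrized_cover_general (s t : ℕ)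
    (I J : Finset (ℕ × ℕ)) (hIJ : I ⊆ J) (hJ : J ⊆ mgrid s t)
    (B : ℕ × ℕ → ℤ) (hB : ∀ p ∈ I, B p = -1 ∨ B p = 0 ∨ B p = 1) :
    ∃ h : ℕ, 1 ≤ h ∧
      (chioExt s t J).card = I.card + (proj1 I).card + (proj2 I).card + h ∧
      (∃ Φ : {A : ℕ × ℕ → ℤ // IsSignOn (chioExt s t J) A ∧ CondensesTo s t I A B} →
          {c : ℕ ⊕ ℕ → ℤ // IsGoodCol I B c},
        Function.Surjective Φ ∧ ∀ c, (Φ ⁻¹' {c}).ncard = 2 ^ h) ∧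
      Set.ncard {A : ℕ × ℕ → ℤ | IsSignOn (chioExt s t J) A ∧ CondensesTo s t I A B} =
        2 ^ h * Set.ncard {c : ℕ ⊕ ℕ → ℤ | IsGoodCol I B c} := by
  have hI : I ⊆ mgrid s t := hIJ.trans hJ
  let e := condensingEquiv hI hIJ hB
  have ε₀ : {ε : ℕ × ℕ → ℤ // IsSignOn (freeCells s t I J) ε} :=
    ⟨1, fun _ _ => .inl rfl, fun _ _ => rfl⟩
  refine ⟨(freeCells s t I J).card, Finset.card_pos.mpr ⟨_, corner_mem_freeCells hI⟩, ?_,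
    ⟨fun A => (e A).1, fun c => ⟨e.symm (c, ε₀), by simp⟩, fun c => ?_⟩, ?_⟩
  · rw [← Finset.card_sdiff_add_card_eq_card (pinnedCells_subset_chioExt hIJ),
      card_pinnedCells hI, freeCells]
    ring
  · rw [ncard_fiber_fst_comp, card_isSignOn]
  · rw [← Nat.card_coe_set_eq, ← Nat.card_coe_set_eq]
    exact (Nat.card_congr e).trans (by rw [Nat.card_prod, card_isSignOn, mul_comm]; rfl)

/-- **The parametrized covering lemma.** For `s,t ≥ 2`, `I ⊆ J ⊆ {1,…,s-1}×{1,…,t-1}` and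
`B : I → {−1,0,+1}`, with `h(I,J) := |J̆| − |I| − |p1(I)| − |p2(I)|`: one has `h(I,J) ≥ 1`,
and there is a map `Φ` from `{A : J̆ → {±1} : A condenses to B}` onto `Col(X_B, σ_B)` all of
whose fibres have cardinality exactly `2^{h(I,J)}`; in particular the number of such `A`
equals `2^{h(I,J)} · |Col(X_B, σ_B)|`. -/
theorem parametrized_cover (s t : ℕ) (hs : 2 ≤ s) (ht : 2 ≤ t)
    (I J : Finset (ℕ × ℕ)) (hIJ : I ⊆ J) (hJ : J ⊆ mgrid s t)
    (B : ℕ × ℕ → ℤ) (hB : ∀ p ∈ I, B p = -1 ∨ B p = 0 ∨ B p = 1) :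
    ∃ h : ℕ, 1 ≤ h ∧
      (chioExt s t J).card = I.card + (proj1 I).card + (proj2 I).card + h ∧
      (∃ Φ : {A : ℕ × ℕ → ℤ // IsSignOn (chioExt s t J) A ∧ CondensesTo s t I A B} →
          {c : ℕ ⊕ ℕ → ℤ // IsGoodCol I B c},
        Function.Surjective Φ ∧ ∀ c, (Φ ⁻¹' {c}).ncard = 2 ^ h) ∧
      Set.ncard {A : ℕ × ℕ → ℤ | IsSignOn (chioExt s t J) A ∧ CondensesTo s t I A B} =
        2 ^ h * Set.ncard {c : ℕ ⊕ ℕ → ℤ | IsGoodCol I B c} :=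
  parametrized_cover_general s t I J hIJ hJ B hB
end

section
/- Characterization of the image of Chio condensation: Let s,t ≥ 2 and let B : {1,…,s−1}×{1,…,t−1} → {−1,0,+1} be a fully specified matrix. Then there exists A : {1,…,s}×{1,…,t} → {−1,+1} with A(i,j)·A(s,t) − A(i,t)·A(s,j) = 2·B(i,j) for all (i,j) if and only if |{A : {1,…,s}×{1,…,t} → {−1,+1} : A condenses to B}| = 2^{1 + β0(X_B)} (equivalently, P_chio[{B}] = 2·2^{β0(X_B)}/2^{s·t}). -/
/-- The underlying graph `X_B` of the signed bipartite graph associated with `B : I → {−1,0,+1}`: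
`Sum.inl i` is adjacent to `Sum.inr j` iff `(i,j) ∈ I` and `B (i,j) ≠ 0`. -/
def sGraph (I : Finset (ℕ × ℕ)) (B : ℕ × ℕ → ℤ) : SimpleGraph (ℕ ⊕ ℕ) where
  Adj u v := (∃ p ∈ I, B p ≠ 0 ∧ u = Sum.inl p.1 ∧ v = Sum.inr p.2) ∨
             (∃ p ∈ I, B p ≠ 0 ∧ v = Sum.inl p.1 ∧ u = Sum.inr p.2)
  symm := ⟨fun u v h => Or.symm h⟩
  loopless := by
    constructor
    rintro u (⟨p, -, -, h1, h2⟩ | ⟨p, -, -, h1, h2⟩) <;> subst h1 <;> simp at h2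

/-- `β0(X_B)`: the number of connected components of `X_B`, i.e. the number of connected
components of the ambient graph meeting the vertex set of `X_B`. -/
noncomputable def betaZero (I : Finset (ℕ × ℕ)) (B : ℕ × ℕ → ℤ) : ℕ :=
  Set.ncard ((sGraph I B).connectedComponentMk '' (vertSet I : Set (ℕ ⊕ ℕ)))

/-- The sign `σ_B` of an edge of `X_B`, read off from `B`. -/
def eSign (B : ℕ × ℕ → ℤ) : ℕ ⊕ ℕ → ℕ ⊕ ℕ → ℤ
  | Sum.inl i, Sum.inr j => B (i, j)
  | Sum.inr j, Sum.inl i => B (i, j)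
  | Sum.inl _, Sum.inl _ => 0
  | Sum.inr _, Sum.inr _ => 0

/-- The signed graph `(X_B, σ_B)` is balanced: every cycle contains an even number
of edges of sign `−1`. -/
def IsBalancedSG (I : Finset (ℕ × ℕ)) (B : ℕ × ℕ → ℤ) : Prop :=
  ∀ (v : ℕ ⊕ ℕ) (w : (sGraph I B).Walk v v), w.IsCycle →
    Even ((w.darts.filter fun d => decide (eSign B d.toProd.1 d.toProd.2 = -1)).length)

/-- The full grid `{1,…,s} × {1,…,t}` (the domain of the uncondensed sign matrices). -/
def fullGrid (s t : ℕ) : Finset (ℕ × ℕ) := Finset.Icc 1 s ×ˢ Finset.Icc 1 t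

/-!
Condensation recovers every interior entry of a sign matrix from its border,
`A (i, j) = A (s, t) * (A (i, t) * A (s, j) + 2 * B (i, j))`, and a sign border extends to a
solution exactly when `A (i, t) * A (s, j) = -B (i, j)` along every edge of `X_B`. So, given
one solution, the others arise by flipping the pivot `A (s, t)` and by flipping the border
entries of each component of `X_B` together (a row-and-column rescaling), and distinct flips
give distinct matrices: there are `2 * 2 ^ β0(X_B)` of them.
-/

open SimpleGraph

lemma IsSignOn.isUnit {E : Finset (ℕ × ℕ)} {A : ℕ × ℕ → ℤ} (hA : IsSignOn E A) (p : ℕ × ℕ) :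
    IsUnit (A p) := by
  by_cases hp : p ∈ E
  · exact Int.isUnit_iff.mpr (hA.1 p hp)
  · rw [hA.2 p hp]
    exact isUnit_one

lemma eq_mul_add_of_mul_sub_eq {a x d e b : ℤ} (ha : IsUnit a) (h : x * a - d * e = 2 * b) :
    x = a * (d * e + 2 * b) := by
  linear_combination a * h - x * Int.isUnit_mul_self ha

lemma eq_neg_of_sub_eq_two_mul_of_isUnit {x y b : ℤ} (hx : IsUnit x) (hy : IsUnit y)
    (h : x - y = 2 * b) (hb : b ≠ 0) : y = -b := by
  rcases Int.isUnit_iff.mp hx with rfl | rfl <;> rcases Int.isUnit_iff.mp hy with rfl | rfl <;>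
    omega

lemma mul_eq_mul_of_mul_eq_mul_of_isUnit {a b a' b' : ℤ} (ha : IsUnit a) (hb' : IsUnit b')
    (h : a * b = a' * b') : a * a' = b * b' := by
  linear_combination (-(a * b')) * h + (b * b') * Int.isUnit_mul_self ha -
    (a * a') * Int.isUnit_mul_self hb'

section Condensation

variable {s t : ℕ} {I E : Finset (ℕ × ℕ)} {A B : ℕ × ℕ → ℤ} {p : ℕ × ℕ}

lemma CondensesTo.apply_eq (hA : IsSignOn E A) (h : CondensesTo s t I A B) (hp : p ∈ I) :
    A p = A (s, t) * (A (p.1, t) * A (s, p.2) + 2 * B p) :=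
  eq_mul_add_of_mul_sub_eq (hA.isUnit _) (h p hp)

lemma CondensesTo.border_mul_eq_neg (hA : IsSignOn E A) (h : CondensesTo s t I A B)
    (hp : p ∈ I) (hBp : B p ≠ 0) : A (p.1, t) * A (s, p.2) = -B p :=
  eq_neg_of_sub_eq_two_mul_of_isUnit ((hA.isUnit _).mul (hA.isUnit _))
    ((hA.isUnit _).mul (hA.isUnit _)) (h p hp) hBp

end Condensation

section Grid

variable {s t : ℕ} {p : ℕ × ℕ}

lemma mem_fullGrid {i j : ℕ} : (i, j) ∈ fullGrid s t ↔ 1 ≤ i ∧ i ≤ s ∧ 1 ≤ j ∧ j ≤ t := by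
  simp only [fullGrid, Finset.mem_product, Finset.mem_Icc, and_assoc]

lemma mem_fullGrid_of_mem_mgrid (hp : p ∈ mgrid s t) :
    p ∈ fullGrid s t ∧ (p.1, t) ∈ fullGrid s t ∧ (s, p.2) ∈ fullGrid s t ∧
      (s, t) ∈ fullGrid s t := by
  simp only [mgrid, fullGrid, Finset.mem_product, Finset.mem_Icc] at hp ⊢
  omega

lemma mem_mgrid_iff : p ∈ mgrid s t ↔ p ∈ fullGrid s t ∧ p.1 ≠ s ∧ p.2 ≠ t := by
  simp only [mgrid, fullGrid, Finset.mem_product, Finset.mem_Icc]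
  omega

lemma inl_mem_vertSet_s7 {i : ℕ} (hi : 1 ≤ i) (his : i < s) (ht : 2 ≤ t) :
    Sum.inl i ∈ vertSet (mgrid s t) := by
  simp only [vertSet, proj1, mgrid, Finset.mem_union, Finset.mem_image, Finset.mem_product,
    Finset.mem_Icc]
  exact Or.inl ⟨i, ⟨(i, 1), by omega, rfl⟩, rfl⟩

lemma inr_mem_vertSet_s7 {j : ℕ} (hj : 1 ≤ j) (hjt : j < t) (hs : 2 ≤ s) :
    Sum.inr j ∈ vertSet (mgrid s t) := by
  simp only [vertSet, proj2, mgrid, Finset.mem_union, Finset.mem_image, Finset.mem_product,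
    Finset.mem_Icc]
  exact Or.inr ⟨j, ⟨(1, j), by omega, rfl⟩, rfl⟩

lemma mem_vertSet_mgrid {v : ℕ ⊕ ℕ} (hv : v ∈ vertSet (mgrid s t)) :
    (∃ i, v = Sum.inl i ∧ 1 ≤ i ∧ i < s) ∨ (∃ j, v = Sum.inr j ∧ 1 ≤ j ∧ j < t) := by
  simp only [vertSet, proj1, proj2, mgrid, Finset.mem_union, Finset.mem_image,
    Finset.mem_product, Finset.mem_Icc] at hv
  rcases hv with ⟨i, ⟨q, hq, rfl⟩, rfl⟩ | ⟨j, ⟨q, hq, rfl⟩, rfl⟩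
  · exact Or.inl ⟨q.1, rfl, by omega⟩
  · exact Or.inr ⟨q.2, rfl, by omega⟩

end Grid

theorem eq_of_condensesTo_of_eqOn_border {s t : ℕ} {A A' B : ℕ × ℕ → ℤ}
    (hA : IsSignOn (fullGrid s t) A) (hA' : IsSignOn (fullGrid s t) A')
    (hc : CondensesTo s t (mgrid s t) A B) (hc' : CondensesTo s t (mgrid s t) A' B)
    (hborder : ∀ p ∈ fullGrid s t, p.1 = s ∨ p.2 = t → A p = A' p) : A = A' := by
  funext p
  by_cases hp : p ∈ fullGrid s t
  · by_cases hb : p.1 = s ∨ p.2 = t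
    · exact hborder p hp hb
    obtain ⟨his, hjt⟩ := not_or.mp hb
    have hpm := mem_mgrid_iff.mpr ⟨hp, his, hjt⟩
    obtain ⟨-, hit, hsj, hst⟩ := mem_fullGrid_of_mem_mgrid hpm
    rw [hc.apply_eq hA hpm, hc'.apply_eq hA' hpm, hborder _ hst (Or.inl rfl),
      hborder _ hit (Or.inr rfl), hborder _ hsj (Or.inl rfl)]
  · rw [hA.2 p hp, hA'.2 p hp]

section RowColScale

variable {s t : ℕ} {r c : ℕ → ℤˣ} {A B : ℕ × ℕ → ℤ}

def rowColScale (s t : ℕ) (r c : ℕ → ℤˣ) (A : ℕ × ℕ → ℤ) : ℕ × ℕ → ℤ :=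
  fun p => if p ∈ fullGrid s t then ((r p.1 * c p.2 : ℤˣ) : ℤ) * A p else A p

lemma rowColScale_of_mem {p : ℕ × ℕ} (hp : p ∈ fullGrid s t) :
    rowColScale s t r c A p = ((r p.1 * c p.2 : ℤˣ) : ℤ) * A p :=
  if_pos hp

lemma IsSignOn.rowColScale (hA : IsSignOn (fullGrid s t) A) :
    IsSignOn (fullGrid s t) (rowColScale s t r c A) := by
  refine ⟨fun p hp => ?_, fun p hp => ?_⟩
  · rw [rowColScale_of_mem hp]
    exact Int.isUnit_iff.mp ((Units.isUnit _).mul (hA.isUnit p))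
  · simp only [_root_.rowColScale, if_neg hp, hA.2 p hp]

lemma CondensesTo.rowColScale (h : CondensesTo s t (mgrid s t) A B)
    (hrc : ∀ p ∈ mgrid s t, B p ≠ 0 → r p.1 * r s * c p.2 * c t = 1) :
    CondensesTo s t (mgrid s t) (rowColScale s t r c A) B := by
  intro p hp
  obtain ⟨hpf, hit, hsj, hst⟩ := mem_fullGrid_of_mem_mgrid hp
  rw [rowColScale_of_mem hpf, rowColScale_of_mem hit, rowColScale_of_mem hsj,
    rowColScale_of_mem hst]
  have hscaled : ((r p.1 * c p.2 : ℤˣ) : ℤ) * A p * (((r s * c t : ℤˣ) : ℤ) * A (s, t)) -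
      ((r p.1 * c t : ℤˣ) : ℤ) * A (p.1, t) * (((r s * c p.2 : ℤˣ) : ℤ) * A (s, p.2)) =
      ((r p.1 * r s * c p.2 * c t : ℤˣ) : ℤ) * (2 * B p) := by
    rw [← h p hp]
    push_cast
    ring
  rw [hscaled]
  by_cases hBp : B p = 0
  · simp [hBp]
  · simp [hrc p hp hBp]

end RowColScale

theorem SimpleGraph.Walk.apply_eq_of_forall_adj {V β : Type*} {G : SimpleGraph V} {f : V → β}
    (hf : ∀ u v, G.Adj u v → f u = f v) {u v : V} (w : G.Walk u v) : f u = f v := by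
  induction w with
  | nil => rfl
  | cons h _ ih => exact (hf _ _ h).trans ih

def vertComponents (I : Finset (ℕ × ℕ)) (B : ℕ × ℕ → ℤ) : Set (sGraph I B).ConnectedComponent :=
  (sGraph I B).connectedComponentMk '' (vertSet I : Set (ℕ ⊕ ℕ))

section ComponentSign

variable {I : Finset (ℕ × ℕ)} {B : ℕ × ℕ → ℤ}

noncomputable def vertexSign (g : vertComponents I B → ℤˣ) (v : ℕ ⊕ ℕ) : ℤˣ :=
  Function.extend Subtype.val g 1 ((sGraph I B).connectedComponentMk v)

lemma vertexSign_of_mem (g : vertComponents I B → ℤˣ) {v : ℕ ⊕ ℕ} (hv : v ∈ vertSet I) :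
    vertexSign g v = g ⟨_, Set.mem_image_of_mem _ hv⟩ :=
  Subtype.val_injective.extend_apply g 1 ⟨_, Set.mem_image_of_mem _ hv⟩

lemma vertexSign_eq_of_adj (g : vertComponents I B → ℤˣ) {u v : ℕ ⊕ ℕ}
    (h : (sGraph I B).Adj u v) : vertexSign g u = vertexSign g v := by
  rw [vertexSign, vertexSign, ConnectedComponent.sound h.reachable]

end ComponentSign

section ChioParam

variable {s t : ℕ} {B A₀ : ℕ × ℕ → ℤ}

/-- Relative to one solution `A₀`, `εg.1` flips the pivot `(s, t)` and `εg.2` flips, per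
component of `X_B`, the border entries `(i, t)` and `(s, j)`; the interior is rescaled to match. -/
noncomputable def chioParam (s t : ℕ) (B A₀ : ℕ × ℕ → ℤ)
    (εg : ℤˣ × (vertComponents (mgrid s t) B → ℤˣ)) : ℕ × ℕ → ℤ :=
  rowColScale s t (fun i => if i = s then εg.1 else vertexSign εg.2 (Sum.inl i))
    (fun j => if j = t then 1 else εg.1 * vertexSign εg.2 (Sum.inr j)) A₀

variable (εg : ℤˣ × (vertComponents (mgrid s t) B → ℤˣ))

lemma chioParam_corner (hs : 1 ≤ s) (ht : 1 ≤ t) :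
    chioParam s t B A₀ εg (s, t) = εg.1 * A₀ (s, t) := by
  rw [chioParam, rowColScale_of_mem (mem_fullGrid.mpr ⟨hs, le_rfl, ht, le_rfl⟩)]
  simp

lemma chioParam_right {i : ℕ} (hi : 1 ≤ i) (his : i < s) (ht : 1 ≤ t) :
    chioParam s t B A₀ εg (i, t) = vertexSign εg.2 (Sum.inl i) * A₀ (i, t) := by
  rw [chioParam, rowColScale_of_mem (mem_fullGrid.mpr ⟨hi, his.le, ht, le_rfl⟩)]
  simp [his.ne]

lemma chioParam_bottom {j : ℕ} (hs : 1 ≤ s) (hj : 1 ≤ j) (hjt : j < t) :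
    chioParam s t B A₀ εg (s, j) = vertexSign εg.2 (Sum.inr j) * A₀ (s, j) := by
  rw [chioParam, rowColScale_of_mem (mem_fullGrid.mpr ⟨hs, le_rfl, hj, hjt.le⟩)]
  simp [hjt.ne, ← mul_assoc, Int.units_mul_self]

lemma chioParam_mem (h₀ : IsSignOn (fullGrid s t) A₀) (h₀c : CondensesTo s t (mgrid s t) A₀ B) :
    IsSignOn (fullGrid s t) (chioParam s t B A₀ εg) ∧
      CondensesTo s t (mgrid s t) (chioParam s t B A₀ εg) B := by
  refine ⟨h₀.rowColScale, h₀c.rowColScale fun p hp hBp => ?_⟩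
  obtain ⟨-, his, hjt⟩ := mem_mgrid_iff.mp hp
  have hadj : (sGraph (mgrid s t) B).Adj (Sum.inl p.1) (Sum.inr p.2) :=
    Or.inl ⟨p, hp, hBp, rfl, rfl⟩
  simp only [if_neg his, if_neg hjt, ↓reduceIte, mul_one, vertexSign_eq_of_adj εg.2 hadj]
  rw [mul_assoc, ← mul_assoc εg.1, Int.units_mul_self, one_mul, Int.units_mul_self]

lemma chioParam_injective (hs : 1 ≤ s) (ht : 1 ≤ t) (h₀ : IsSignOn (fullGrid s t) A₀) :
    Function.Injective (chioParam s t B A₀) := by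
  rintro ⟨ε, g⟩ ⟨ε', g'⟩ h
  have cancel : ∀ {p : ℕ × ℕ} {u u' : ℤˣ}, (u : ℤ) * A₀ p = u' * A₀ p → u = u' :=
    fun h' => Units.ext (mul_right_cancel₀ (h₀.isUnit _).ne_zero h')
  obtain rfl : ε = ε' := cancel (by simpa only [chioParam_corner _ hs ht] using congrFun h (s, t))
  congr 1
  funext ⟨_, v, hv, rfl⟩
  rw [← vertexSign_of_mem g hv, ← vertexSign_of_mem g' hv]
  rcases mem_vertSet_mgrid hv with ⟨i, rfl, hi, his⟩ | ⟨j, rfl, hj, hjt⟩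
  · exact cancel (by simpa only [chioParam_right _ hi his ht] using congrFun h (i, t))
  · exact cancel (by simpa only [chioParam_bottom _ hs hj hjt] using congrFun h (s, j))

/-- Two solutions differ on the border `(i, t), (s, j)` by a sign that is constant on each
component of `X_B`, since `A (i, t) * A (s, j) = -B (i, j)` along every edge. -/
lemma exists_chioParam_eq (hs : 2 ≤ s) (ht : 2 ≤ t) (h₀ : IsSignOn (fullGrid s t) A₀)
    (h₀c : CondensesTo s t (mgrid s t) A₀ B) {A : ℕ × ℕ → ℤ} (hA : IsSignOn (fullGrid s t) A)
    (hAc : CondensesTo s t (mgrid s t) A B) : ∃ εg, chioParam s t B A₀ εg = A := by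
  let y : ℕ ⊕ ℕ → ℤ := Sum.elim (fun i => A (i, t) * A₀ (i, t)) (fun j => A (s, j) * A₀ (s, j))
  have hy_adj : ∀ u v, (sGraph (mgrid s t) B).Adj u v → y u = y v := by
    have hedge : ∀ p ∈ mgrid s t, B p ≠ 0 → y (Sum.inl p.1) = y (Sum.inr p.2) := fun p hp hBp =>
      mul_eq_mul_of_mul_eq_mul_of_isUnit (hA.isUnit _) (h₀.isUnit _)
        ((hAc.border_mul_eq_neg hA hp hBp).trans (h₀c.border_mul_eq_neg h₀ hp hBp).symm)
    rintro u v (⟨p, hp, hBp, rfl, rfl⟩ | ⟨p, hp, hBp, rfl, rfl⟩)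
    · exact hedge p hp hBp
    · exact (hedge p hp hBp).symm
  let Y := ConnectedComponent.lift y fun u v w _ => w.apply_eq_of_forall_adj hy_adj
  have hY : ∀ c, IsUnit (Y c) := ConnectedComponent.ind fun v => by
    rcases v with i | j
    exacts [(hA.isUnit _).mul (h₀.isUnit _), (hA.isUnit _).mul (h₀.isUnit _)]
  let ε := ((hA.isUnit (s, t)).mul (h₀.isUnit (s, t))).unit
  refine ⟨(ε, fun c => (hY c.1).unit), ?_⟩
  have hsign : ∀ v ∈ vertSet (mgrid s t),
      (vertexSign (fun c : vertComponents (mgrid s t) B => (hY c.1).unit) v : ℤ) = y v :=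
    fun v hv => by rw [vertexSign_of_mem _ hv]; rfl
  have cancel : ∀ p, A p * A₀ p * A₀ p = A p := fun p => by
    rw [mul_assoc, Int.isUnit_mul_self (h₀.isUnit p), mul_one]
  obtain ⟨hmem, hcond⟩ := chioParam_mem (ε, fun c => (hY c.1).unit) h₀ h₀c
  refine eq_of_condensesTo_of_eqOn_border hmem hA hcond hAc fun p hp hb => ?_
  obtain ⟨i, j⟩ := p
  rw [mem_fullGrid] at hp
  rcases eq_or_ne i s with rfl | his <;> rcases eq_or_ne j t with rfl | hjt
  · rw [chioParam_corner _ (by omega) (by omega)]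
    exact cancel _
  · have hjt : j < t := by omega
    rw [chioParam_bottom _ (by omega) hp.2.2.1 hjt, hsign _ (inr_mem_vertSet_s7 hp.2.2.1 hjt hs)]
    exact cancel _
  · have his : i < s := by omega
    rw [chioParam_right _ hp.1 his (by omega), hsign _ (inl_mem_vertSet_s7 hp.1 his ht)]
    exact cancel _
  · exact (hb.elim his hjt).elim

end ChioParam

theorem ncard_condensesTo_eq {s t : ℕ} (hs : 2 ≤ s) (ht : 2 ≤ t) {B A₀ : ℕ × ℕ → ℤ}
    (h₀ : IsSignOn (fullGrid s t) A₀) (h₀c : CondensesTo s t (mgrid s t) A₀ B) :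
    {A : ℕ × ℕ → ℤ | IsSignOn (fullGrid s t) A ∧ CondensesTo s t (mgrid s t) A B}.ncard =
      2 ^ (1 + betaZero (mgrid s t) B) := by
  have hrange : {A : ℕ × ℕ → ℤ | IsSignOn (fullGrid s t) A ∧ CondensesTo s t (mgrid s t) A B} =
      Set.range (chioParam s t B A₀) := by
    ext A
    constructor
    · rintro ⟨hA, hAc⟩
      exact exists_chioParam_eq hs ht h₀ h₀c hA hAc
    · rintro ⟨εg, rfl⟩
      exact chioParam_mem εg h₀ h₀c
  have : Finite (vertComponents (mgrid s t) B) :=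
    ((vertSet (mgrid s t)).finite_toSet.image _).to_subtype
  rw [hrange, Set.ncard_range_of_injective (chioParam_injective (by omega) (by omega) h₀),
    Nat.card_prod, Nat.card_fun, pow_add, pow_one]
  simp [betaZero, vertComponents, Nat.card_coe_set_eq]

theorem chio_image_characterization_general (s t : ℕ) (hs : 2 ≤ s) (ht : 2 ≤ t)
    (B : ℕ × ℕ → ℤ) :
    (∃ A : ℕ × ℕ → ℤ, IsSignOn (fullGrid s t) A ∧ CondensesTo s t (mgrid s t) A B) ↔
      Set.ncard {A : ℕ × ℕ → ℤ |
          IsSignOn (fullGrid s t) A ∧ CondensesTo s t (mgrid s t) A B} =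
        2 ^ (1 + betaZero (mgrid s t) B) := by
  refine ⟨fun ⟨A₀, h₀, h₀c⟩ => ncard_condensesTo_eq hs ht h₀ h₀c, fun hcard => ?_⟩
  exact Set.nonempty_of_ncard_ne_zero (hcard ▸ by positivity)

/-- **Characterization of the image of Chio condensation.** For `s,t ≥ 2` and a fully
specified `B : {1,…,s-1}×{1,…,t-1} → {−1,0,+1}`: some `A : {1,…,s}×{1,…,t} → {±1}`
condenses to `B` if and only if
`|{A : {1,…,s}×{1,…,t} → {±1} : A condenses to B}| = 2^{1 + β0(X_B)}`. -/
theorem chio_image_characterization (s t : ℕ) (hs : 2 ≤ s) (ht : 2 ≤ t)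
    (B : ℕ × ℕ → ℤ) (hB : ∀ p ∈ mgrid s t, B p = -1 ∨ B p = 0 ∨ B p = 1) :
    (∃ A : ℕ × ℕ → ℤ, IsSignOn (fullGrid s t) A ∧ CondensesTo s t (mgrid s t) A B) ↔
      Set.ncard {A : ℕ × ℕ → ℤ |
          IsSignOn (fullGrid s t) A ∧ CondensesTo s t (mgrid s t) A B} =
        2 ^ (1 + betaZero (mgrid s t) B) :=
  chio_image_characterization_general s t hs ht B
end

section
/- Forgetting signs yields the uniform distribution: Let s,t ≥ 2, let I ⊆ {1,…,s−1}×{1,…,t−1}, and let B : I → {0,1}. Then |{A : Ĭ → {−1,+1} : |A(i,j)·A(s,t) − A(i,t)·A(s,j)| = 2·B(i,j) for all (i,j) ∈ I}| = 2^{|Ĭ| − |I|}, where Ĭ is the Chio extension of I. Equivalently, the map sending A to the {0,1}-pattern of absolute values ½|A(i,j)·A(s,t) − A(i,t)·A(s,j)| on I pushes the uniform measure on {−1,+1}^{Ĭ} forward to the uniform measure on {0,1}^I. -/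
/-! Once `A` is fixed on the border `Ĭ \ I` (the corner `(s,t)`, the last column and the last
row), the constraint at `(i,j) ∈ I` leaves exactly one admissible sign for `A(i,j)`, namely
`(1 - 2 B(i,j)) · A(s,t) · A(i,t) · A(s,j)`. Hence the admissible `A` correspond to the
`2^{|Ĭ \ I|}` sign patterns on the border. -/

lemma ncard_isSignOn (E : Finset (ℕ × ℕ)) :
    {A : ℕ × ℕ → ℤ | IsSignOn E A}.ncard = 2 ^ E.card := by
  let e : {A : ℕ × ℕ → ℤ | IsSignOn E A} ≃ (E → ({1, -1} : Finset ℤ)) :=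
    { toFun := fun A q => ⟨A.1 q, by simpa using A.2.1 q q.2⟩
      invFun := fun f => ⟨fun p => if h : p ∈ E then f ⟨p, h⟩ else 1,
        fun p hp => by
          simpa only [dif_pos hp, Finset.mem_insert, Finset.mem_singleton] using (f ⟨p, hp⟩).2,
        fun p hp => by simp [hp]⟩
      left_inv := fun A => by
        ext p
        by_cases hp : p ∈ E
        · simp [hp]
        · simp [hp, A.2.2 p hp]
      right_inv := fun f => by
        funext q
        simp [q.2] }
  rw [← Nat.card_coe_set_eq, Nat.card_congr e, Nat.card_eq_fintype_card, Fintype.card_fun]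
  simp

lemma ncard_isSignOn_of_determined {E I : Finset (ℕ × ℕ)} (hIE : I ⊆ E)
    (v : ℕ × ℕ → (ℕ × ℕ → ℤ) → ℤ)
    (hv_sign : ∀ A, IsSignOn (E \ I) A → ∀ p ∈ I, v p A = 1 ∨ v p A = -1)
    (hv_local : ∀ A A', (∀ q ∈ E \ I, A q = A' q) → ∀ p ∈ I, v p A = v p A') :
    {A : ℕ × ℕ → ℤ | IsSignOn E A ∧ ∀ p ∈ I, A p = v p A}.ncard = 2 ^ (E \ I).card := by
  rw [← ncard_isSignOn]
  refine Set.ncard_congr (fun A _ p => if p ∈ I then 1 else A p) ?_ ?_ ?_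
  · rintro A ⟨⟨hsign, hone⟩, -⟩
    refine ⟨fun p hp => ?_, fun p hp => ?_⟩
    · rw [Finset.mem_sdiff] at hp
      simpa [hp.2] using hsign p hp.1
    · by_cases hpI : p ∈ I
      · simp [hpI]
      · simpa [hpI] using hone p (by simpa [hpI] using hp)
  · rintro A A' ⟨-, hA⟩ ⟨-, hA'⟩ hAA'
    have hagree : ∀ q ∈ E \ I, A q = A' q := fun q hq => by
      simpa [(Finset.mem_sdiff.1 hq).2] using congrFun hAA' q
    funext p
    by_cases hpI : p ∈ I
    · rw [hA p hpI, hA' p hpI, hv_local A A' hagree p hpI]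
    · simpa [hpI] using congrFun hAA' p
  · rintro A' ⟨hsign, hone⟩
    set A : ℕ × ℕ → ℤ := fun p => if p ∈ I then v p A' else A' p
    have hagree : ∀ q ∈ E \ I, A q = A' q := fun q hq => by
      simp [A, (Finset.mem_sdiff.1 hq).2]
    refine ⟨A, ⟨⟨fun p hp => ?_, fun p hp => ?_⟩, fun p hp => ?_⟩, ?_⟩
    · by_cases hpI : p ∈ I
      · simpa [A, hpI] using hv_sign A' ⟨hsign, hone⟩ p hpI
      · simpa [A, hpI] using hsign p (Finset.mem_sdiff.2 ⟨hp, hpI⟩)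
    · have hpI : p ∉ I := fun h => hp (hIE h)
      simpa [A, hpI] using hone p (fun h => hp (Finset.mem_sdiff.1 h).1)
    · simp only [A, if_pos hp]
      exact hv_local A' A (fun q hq => (hagree q hq).symm) p hp
    · funext p
      by_cases hpI : p ∈ I
      · simp [hpI, hone p (fun h => (Finset.mem_sdiff.1 h).2 hpI)]
      · simp [A, hpI]

lemma abs_mul_sub_eq_two_mul_iff {x a b β : ℤ} (hx : x = 1 ∨ x = -1) (ha : a = 1 ∨ a = -1)
    (hb : b = 1 ∨ b = -1) (hβ : β = 0 ∨ β = 1) :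
    |x * a - b| = 2 * β ↔ x = (1 - 2 * β) * a * b := by
  rcases hx with rfl | rfl <;> rcases ha with rfl | rfl <;> rcases hb with rfl | rfl <;>
    rcases hβ with rfl | rfl <;> norm_num

lemma mul_eq_one_or_neg_one {a b : ℤ} (ha : a = 1 ∨ a = -1) (hb : b = 1 ∨ b = -1) :
    a * b = 1 ∨ a * b = -1 := by
  rcases ha with rfl | rfl <;> rcases hb with rfl | rfl <;> norm_num

section ChioBorder

variable {s t : ℕ} {I : Finset (ℕ × ℕ)}

lemma lastRow_notMem_mgrid (j : ℕ) : (s, j) ∉ mgrid s t := by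
  simp only [mgrid, Finset.mem_product, Finset.mem_Icc]
  omega

lemma lastCol_notMem_mgrid (i : ℕ) : (i, t) ∉ mgrid s t := by
  simp only [mgrid, Finset.mem_product, Finset.mem_Icc]
  omega

lemma subset_chioExt (s t : ℕ) (I : Finset (ℕ × ℕ)) : I ⊆ chioExt s t I := fun _ hp => by
  simp [chioExt, hp]

lemma corner_mem_chioExt_sdiff (hI : I ⊆ mgrid s t) : (s, t) ∈ chioExt s t I \ I :=
  Finset.mem_sdiff.2 ⟨Finset.mem_insert_self _ _, fun h => lastCol_notMem_mgrid s (hI h)⟩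

lemma lastCol_mem_chioExt_sdiff (hI : I ⊆ mgrid s t) {p : ℕ × ℕ} (hp : p ∈ I) :
    (p.1, t) ∈ chioExt s t I \ I := by
  refine Finset.mem_sdiff.2 ⟨?_, fun h => lastCol_notMem_mgrid p.1 (hI h)⟩
  simp only [chioExt, Finset.mem_insert, Finset.mem_union, Finset.mem_image]
  exact Or.inr (Or.inl (Or.inl ⟨p.1, ⟨p, hp, rfl⟩, rfl⟩))

lemma lastRow_mem_chioExt_sdiff (hI : I ⊆ mgrid s t) {p : ℕ × ℕ} (hp : p ∈ I) :
    (s, p.2) ∈ chioExt s t I \ I := by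
  refine Finset.mem_sdiff.2 ⟨?_, fun h => lastRow_notMem_mgrid p.2 (hI h)⟩
  simp only [chioExt, Finset.mem_insert, Finset.mem_union, Finset.mem_image]
  exact Or.inr (Or.inl (Or.inr ⟨p.2, ⟨p, hp, rfl⟩, rfl⟩))

def forcedSign (s t : ℕ) (B : ℕ × ℕ → ℤ) (p : ℕ × ℕ) (A : ℕ × ℕ → ℤ) : ℤ :=
  (1 - 2 * B p) * A (s, t) * (A (p.1, t) * A (s, p.2))

lemma forcedSign_congr (hI : I ⊆ mgrid s t) (B : ℕ × ℕ → ℤ) {A A' : ℕ × ℕ → ℤ}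
    (h : ∀ q ∈ chioExt s t I \ I, A q = A' q) {p : ℕ × ℕ} (hp : p ∈ I) :
    forcedSign s t B p A = forcedSign s t B p A' := by
  simp only [forcedSign, h _ (corner_mem_chioExt_sdiff hI), h _ (lastCol_mem_chioExt_sdiff hI hp),
    h _ (lastRow_mem_chioExt_sdiff hI hp)]

lemma abs_chio_eq_iff_eq_forcedSign (hI : I ⊆ mgrid s t) {B : ℕ × ℕ → ℤ} {A : ℕ × ℕ → ℤ}
    (hA : ∀ q ∈ chioExt s t I \ I, A q = 1 ∨ A q = -1) {p : ℕ × ℕ} (hp : p ∈ I)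
    (hAp : A p = 1 ∨ A p = -1) (hBp : B p = 0 ∨ B p = 1) :
    |A p * A (s, t) - A (p.1, t) * A (s, p.2)| = 2 * B p ↔ A p = forcedSign s t B p A :=
  abs_mul_sub_eq_two_mul_iff hAp (hA _ (corner_mem_chioExt_sdiff hI))
    (mul_eq_one_or_neg_one (hA _ (lastCol_mem_chioExt_sdiff hI hp))
      (hA _ (lastRow_mem_chioExt_sdiff hI hp))) hBp

lemma forcedSign_eq_one_or_neg_one (hI : I ⊆ mgrid s t) {B : ℕ × ℕ → ℤ} {A : ℕ × ℕ → ℤ}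
    (hA : ∀ q ∈ chioExt s t I \ I, A q = 1 ∨ A q = -1) {p : ℕ × ℕ} (hp : p ∈ I)
    (hBp : B p = 0 ∨ B p = 1) :
    forcedSign s t B p A = 1 ∨ forcedSign s t B p A = -1 := by
  have hB' : 1 - 2 * B p = 1 ∨ 1 - 2 * B p = -1 := by rcases hBp with h | h <;> simp [h]
  exact mul_eq_one_or_neg_one (mul_eq_one_or_neg_one hB' (hA _ (corner_mem_chioExt_sdiff hI)))
    (mul_eq_one_or_neg_one (hA _ (lastCol_mem_chioExt_sdiff hI hp))
      (hA _ (lastRow_mem_chioExt_sdiff hI hp)))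

end ChioBorder

theorem abs_chio_pattern_uniform_general (s t : ℕ)
    (I : Finset (ℕ × ℕ)) (hI : I ⊆ mgrid s t)
    (B : ℕ × ℕ → ℤ) (hB : ∀ p ∈ I, B p = 0 ∨ B p = 1) :
    Set.ncard {A : ℕ × ℕ → ℤ | IsSignOn (chioExt s t I) A ∧
        ∀ p ∈ I, |A p * A (s, t) - A (p.1, t) * A (s, p.2)| = 2 * B p} *
      2 ^ I.card = 2 ^ (chioExt s t I).card := by
  have hIE := subset_chioExt s t I
  have hset : {A : ℕ × ℕ → ℤ | IsSignOn (chioExt s t I) A ∧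
      ∀ p ∈ I, |A p * A (s, t) - A (p.1, t) * A (s, p.2)| = 2 * B p} =
      {A | IsSignOn (chioExt s t I) A ∧ ∀ p ∈ I, A p = forcedSign s t B p A} := by
    ext A
    refine and_congr_right fun hA => forall₂_congr fun p hp => ?_
    exact abs_chio_eq_iff_eq_forcedSign hI (fun q hq => hA.1 q (Finset.mem_sdiff.1 hq).1) hp
      (hA.1 p (hIE hp)) (hB p hp)
  rw [hset, ncard_isSignOn_of_determined hIE (forcedSign s t B)
      (fun A hA p hp => forcedSign_eq_one_or_neg_one hI hA.1 hp (hB p hp))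
      (fun A A' h p hp => forcedSign_congr hI B h hp),
    ← pow_add, Finset.card_sdiff_add_card_eq_card hIE]

/-- **Forgetting signs yields the uniform distribution.** For `s,t ≥ 2`,
`I ⊆ {1,…,s-1}×{1,…,t-1}` and `B : I → {0,1}`, the number of `A : Ĭ → {±1}` with
`|A(i,j)·A(s,t) − A(i,t)·A(s,j)| = 2·B(i,j)` for all `(i,j) ∈ I` equals `2^{|Ĭ| − |I|}`
(stated multiplied through by `2^{|I|}`); equivalently, taking the `{0,1}`-pattern of
absolute values pushes the uniform measure on `{±1}^{Ĭ}` forward to the uniform measure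
on `{0,1}^I`. -/
theorem abs_chio_pattern_uniform (s t : ℕ) (hs : 2 ≤ s) (ht : 2 ≤ t)
    (I : Finset (ℕ × ℕ)) (hI : I ⊆ mgrid s t)
    (B : ℕ × ℕ → ℤ) (hB : ∀ p ∈ I, B p = 0 ∨ B p = 1) :
    Set.ncard {A : ℕ × ℕ → ℤ | IsSignOn (chioExt s t I) A ∧
        ∀ p ∈ I, |A p * A (s, t) - A (p.1, t) * A (s, p.2)| = 2 * B p} *
      2 ^ I.card = 2 ^ (chioExt s t I).card :=
  abs_chio_pattern_uniform_general s t I hI B hB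
end

section
/- On rank-level sets the Chio measure agrees with the uniform measure on {0,1}-matrices: Let s,t ≥ 2 and let R be a set of positive integers (the paper takes R ⊆ {1,…,min(s,t)}). Then 2^{(s−1)(t−1)} · |{A : {1,…,s}×{1,…,t} → {−1,+1} : rank_ℚ(½C(A)) ∈ R}| = 2^{s·t} · |{B : {1,…,s−1}×{1,…,t−1} → {0,1} : rank_ℚ(B) ∈ R}|, where ½C(A) is the (s−1)×(t−1) integer matrix with entries (A(i,j)·A(s,t) − A(i,t)·A(s,j))/2 ∈ {−1,0,+1} and rank_ℚ denotes the rank of the matrix viewed over the rationals. Equivalently, P_chio[{B̃ ∈ {−1,0,+1}^{(s−1)×(t−1)} : rank(B̃) ∈ R}] equals the proportion of matrices in {0,1}^{(s−1)×(t−1)} of rank in R. -/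
/-!
Write `c = A s t`, `x i = A i t`, `y j = A s j` for a `±1` matrix `A`. As signs square to one,
`(A i j * c - x i * y j) / 2 = -x i * ((1 - A i j * c * x i * y j) / 2) * y j`, so `½C(A)` is the
`{0,1}`-matrix `B i j = (1 - A i j * c * x i * y j) / 2` with rows and columns multiplied by signs,
and has the same rank as `B`. Moreover `A` is determined freely by its last column, its last row
and the interior signs `A i j * c * x i * y j`, so each `B` comes from exactly `2 ^ (s + t - 1)`
matrices `A`.
-/

open Matrix

theorem Matrix.range_map {m n α β : Type*} (f : α → β) :
    Set.range (fun M : Matrix m n α => M.map f) = {N | ∀ i j, N i j ∈ Set.range f} := by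
  ext N
  constructor
  · rintro ⟨M, rfl⟩ i j
    exact ⟨M i j, rfl⟩
  · intro h
    choose M hM using h
    exact ⟨of M, ext hM⟩

theorem Matrix.rank_diagonal_mul_mul_diagonal {m n R : Type*} [CommRing R] [Fintype m] [Fintype n]
    [DecidableEq m] [DecidableEq n] {d : m → R} {e : n → R} (hd : ∀ i, IsUnit (d i))
    (he : ∀ j, IsUnit (e j)) (M : Matrix m n R) :
    (diagonal d * M * diagonal e).rank = M.rank := by
  rw [rank_mul_eq_left_of_isUnit_det _ _ (by rwa [det_diagonal, IsUnit.prod_univ_iff]),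
    rank_mul_eq_right_of_isUnit_det _ _ (by rwa [det_diagonal, IsUnit.prod_univ_iff])]

namespace Chio

variable {m n : ℕ}

section Twist

variable {G : Type*} [Group G]

def boundary (U : Matrix (Fin (m + 1)) (Fin (n + 1)) G) : (Fin (m + 1) → G) × (Fin n → G) :=
  (fun i => U i (Fin.last n), fun j => U (Fin.last m) j.castSucc)

def twist (U : Matrix (Fin (m + 1)) (Fin (n + 1)) G) : Matrix (Fin m) (Fin n) G :=
  of fun i j => U i.castSucc j.castSucc * U (Fin.last m) (Fin.last n) *
    U i.castSucc (Fin.last n) * U (Fin.last m) j.castSucc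

theorem boundary_twist_injective :
    Function.Injective fun U : Matrix (Fin (m + 1)) (Fin (n + 1)) G => (boundary U, twist U) := by
  intro U V h
  simp only [Prod.mk.injEq, boundary, twist, funext_iff] at h
  obtain ⟨⟨hcol, hrow⟩, htwist⟩ := h
  ext i j
  induction j using Fin.lastCases with
  | last => exact hcol i
  | cast j =>
    induction i using Fin.lastCases with
    | last => exact hrow j
    | cast i => simpa [hcol, hrow] using congr_fun₂ htwist i j

theorem boundary_twist_bijective [Finite G] :
    Function.Bijective fun U : Matrix (Fin (m + 1)) (Fin (n + 1)) G => (boundary U, twist U) := by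
  refine (Nat.bijective_iff_injective_and_card _).2 ⟨boundary_twist_injective, ?_⟩
  simp only [Matrix, Nat.card_prod, Nat.card_fun, Nat.card_eq_fintype_card, Fintype.card_fin,
    ← pow_mul, ← pow_add]
  ring_nf

theorem ncard_preimage_twist [Finite G] (S : Set (Matrix (Fin m) (Fin n) G)) :
    (twist ⁻¹' S).ncard = Nat.card G ^ (m + 1 + n) * S.ncard := by
  have hS : twist ⁻¹' S = (fun U => (boundary U, twist U)) ⁻¹' (Set.univ ×ˢ S) := by
    ext
    simp
  rw [hS, Set.ncard_preimage_of_injective_subset_range boundary_twist_injective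
    (by simp [boundary_twist_bijective.2.range_eq]), Set.ncard_prod, Set.ncard_univ]
  simp [Nat.card_prod, Nat.card_fun, pow_add]

end Twist

def bitOfSign (u : ℤˣ) : ℤ := (1 - u) / 2

theorem bitOfSign_injective : Function.Injective bitOfSign := by
  intro u v
  rcases Int.units_eq_one_or u with rfl | rfl <;> rcases Int.units_eq_one_or v with rfl | rfl <;>
    simp [bitOfSign]

theorem range_bitOfSign : Set.range bitOfSign = {0, 1} := by
  ext x
  constructor
  · rintro ⟨u, rfl⟩
    rcases Int.units_eq_one_or u with rfl | rfl <;> simp [bitOfSign]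
  · rintro (rfl | rfl)
    exacts [⟨1, rfl⟩, ⟨-1, rfl⟩]

theorem mul_sub_mul_div_two (u v x y : ℤˣ) :
    ((u * v : ℤ) - x * y) / 2 = -x * bitOfSign (u * v * x * y) * y := by
  rcases Int.units_eq_one_or u with rfl | rfl <;> rcases Int.units_eq_one_or v with rfl | rfl <;>
    rcases Int.units_eq_one_or x with rfl | rfl <;> rcases Int.units_eq_one_or y with rfl | rfl <;>
    simp [bitOfSign]

def halfCondensate (A : Matrix (Fin (m + 1)) (Fin (n + 1)) ℤ) : Matrix (Fin m) (Fin n) ℤ :=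
  of fun i j => (A i.castSucc j.castSucc * A (Fin.last m) (Fin.last n) -
      A i.castSucc (Fin.last n) * A (Fin.last m) j.castSucc) / 2

theorem halfCondensate_map_val (U : Matrix (Fin (m + 1)) (Fin (n + 1)) ℤˣ) :
    halfCondensate (U.map (↑)) = diagonal (fun i : Fin m => -(U i.castSucc (Fin.last n) : ℤ)) *
      (twist U).map bitOfSign * diagonal (fun j : Fin n => (U (Fin.last m) j.castSucc : ℤ)) := by
  ext i j
  simp [halfCondensate, twist, mul_diagonal, diagonal_mul, mul_sub_mul_div_two]

theorem rank_halfCondensate_map_val {K : Type*} [CommRing K]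
    (U : Matrix (Fin (m + 1)) (Fin (n + 1)) ℤˣ) :
    ((halfCondensate (U.map (↑))).map (Int.cast : ℤ → K)).rank =
      (((twist U).map bitOfSign).map (Int.cast : ℤ → K)).rank := by
  simp only [halfCondensate_map_val, ← Int.coe_castRingHom, Matrix.map_mul,
    diagonal_map (map_zero _)]
  exact rank_diagonal_mul_mul_diagonal (fun i => ((U _ _).isUnit.neg).map _)
    (fun j => (U _ _).isUnit.map _) _

end Chio

theorem chio_measure_rank_level_sets_general (a b : ℕ) (R : Set ℕ) :
    2 ^ ((a + 1) * (b + 1)) *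
        Set.ncard {A : Matrix (Fin (a + 2)) (Fin (b + 2)) ℤ |
          (∀ i j, A i j = 1 ∨ A i j = -1) ∧
          ((Matrix.of fun (i : Fin (a + 1)) (j : Fin (b + 1)) =>
              (A i.castSucc j.castSucc * A (Fin.last (a + 1)) (Fin.last (b + 1)) -
                A i.castSucc (Fin.last (b + 1)) * A (Fin.last (a + 1)) j.castSucc) /
                2).map (Int.cast : ℤ → ℚ)).rank ∈ R} =
      2 ^ ((a + 2) * (b + 2)) *
        Set.ncard {B : Matrix (Fin (a + 1)) (Fin (b + 1)) ℤ |
          (∀ i j, B i j = 0 ∨ B i j = 1) ∧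
          (B.map (Int.cast : ℤ → ℚ)).rank ∈ R} := by
  set rankIn : Set (Matrix (Fin (a + 1)) (Fin (b + 1)) ℤ) :=
    {B | (B.map (Int.cast : ℤ → ℚ)).rank ∈ R}
  have hsigns : {A : Matrix (Fin (a + 2)) (Fin (b + 2)) ℤ |
      (∀ i j, A i j = 1 ∨ A i j = -1) ∧ Chio.halfCondensate A ∈ rankIn} =
      (·.map Units.val) '' (Chio.twist ⁻¹' ((·.map Chio.bitOfSign) ⁻¹' rankIn)) := by
    have hpreimage : Chio.twist ⁻¹' ((·.map Chio.bitOfSign) ⁻¹' rankIn) =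
        (·.map Units.val) ⁻¹' (Chio.halfCondensate ⁻¹' rankIn) := by
      ext U
      simp [rankIn, Chio.rank_halfCondensate_map_val]
    have hunits : Set.range ((↑) : ℤˣ → ℤ) = {1, -1} := Set.ext fun x => Int.isUnit_iff
    rw [hpreimage, Set.image_preimage_eq_range_inter, range_map, hunits]
    rfl
  have hbits : {B : Matrix (Fin (a + 1)) (Fin (b + 1)) ℤ |
      (∀ i j, B i j = 0 ∨ B i j = 1) ∧ B ∈ rankIn} =
      (fun W : Matrix (Fin (a + 1)) (Fin (b + 1)) ℤˣ => W.map Chio.bitOfSign) ''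
        ((·.map Chio.bitOfSign) ⁻¹' rankIn) := by
    rw [Set.image_preimage_eq_range_inter, range_map, Chio.range_bitOfSign]
    rfl
  change _ * Set.ncard {A | _ ∧ Chio.halfCondensate A ∈ rankIn} =
    _ * Set.ncard {B | _ ∧ B ∈ rankIn}
  rw [hsigns, hbits, Set.ncard_image_of_injective _ (map_injective Units.val_injective),
    Chio.ncard_preimage_twist,
    Set.ncard_image_of_injective _ (map_injective Chio.bitOfSign_injective),
    Nat.card_eq_fintype_card, Fintype.card_units_int, ← mul_assoc, ← pow_add]
  ring_nf

/-- **On rank-level sets the Chio measure agrees with the uniform measure on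
`{0,1}`-matrices.** For `s,t ≥ 2` (encoded as `s = a + 2`, `t = b + 2`) and a set `R` of
positive integers:
`2^{(s−1)(t−1)} · |{A ∈ {±1}^{s×t} : rank_ℚ(½C(A)) ∈ R}|
  = 2^{s·t} · |{B ∈ {0,1}^{(s−1)×(t−1)} : rank_ℚ(B) ∈ R}|`,
where `½C(A)` is the halved Chio condensate with entries
`(A(i,j)·A(s,t) − A(i,t)·A(s,j))/2 ∈ {−1,0,+1}` and ranks are computed over `ℚ`. -/
theorem chio_measure_rank_level_sets (a b : ℕ) (R : Set ℕ) (hR : ∀ r ∈ R, 0 < r) :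
    2 ^ ((a + 1) * (b + 1)) *
        Set.ncard {A : Matrix (Fin (a + 2)) (Fin (b + 2)) ℤ |
          (∀ i j, A i j = 1 ∨ A i j = -1) ∧
          ((Matrix.of fun (i : Fin (a + 1)) (j : Fin (b + 1)) =>
              (A i.castSucc j.castSucc * A (Fin.last (a + 1)) (Fin.last (b + 1)) -
                A i.castSucc (Fin.last (b + 1)) * A (Fin.last (a + 1)) j.castSucc) /
                2).map (Int.cast : ℤ → ℚ)).rank ∈ R} =
      2 ^ ((a + 2) * (b + 2)) *
        Set.ncard {B : Matrix (Fin (a + 1)) (Fin (b + 1)) ℤ |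
          (∀ i j, B i j = 0 ∨ B i j = 1) ∧
          (B.map (Int.cast : ℤ → ℚ)).rank ∈ R} :=
  chio_measure_rank_level_sets_general a b R
end

section
/- The density of singular ±1 matrices equals the density of singular {0,1} matrices one size smaller: For every n ≥ 2, 2^{(n−1)²} · |{A : {1,…,n}² → {−1,+1} : det(A) = 0}| = 2^{n²} · |{B : {1,…,n−1}² → {0,1} : det(B) = 0}|, where the determinants are taken over ℤ (equivalently over ℚ). In other words, the proportion of singular matrices among all n×n matrices with entries in {−1,+1} equals the proportion of singular matrices among all (n−1)×(n−1) matrices with entries in {0,1}. -/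
/-!
Flipping the signs of rows and of columns changes a `±1` matrix only by units, hence preserves
singularity. Every `±1` matrix of size `n + 1` arises in exactly one way, by flipping the rows and
the columns other than the first, from a matrix whose first row and first column are all `1`.
Such a normalized matrix is `J - 2B` bordered by ones, with `B` a `{0,1}` matrix of size `n`;
subtracting its first row from the others shows that its determinant is `(-2)ⁿ det B`. This
gives `2ⁿ⁺¹ · 2ⁿ · #{singular B} = #{singular A}`.
-/

open Matrix

namespace SignMatrix

theorem det_diagonal_units_mul_mul_diagonal_units_eq_zero_iff {ι R : Type*} [Fintype ι]
    [DecidableEq ι] [CommRing R] (r c : ι → Rˣ) (A : Matrix ι ι R) :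
    (diagonal (fun i => (r i : R)) * A * diagonal (fun j => (c j : R))).det = 0 ↔ A.det = 0 := by
  simp only [det_mul, det_diagonal, ← Units.coe_prod, Units.mul_right_eq_zero,
    Units.mul_left_eq_zero]

def singularSignMatrices (n : ℕ) : Set (Matrix (Fin n) (Fin n) ℤ) :=
  {A | (∀ i j, A i j = 1 ∨ A i j = -1) ∧ A.det = 0}

def singularZeroOneMatrices (n : ℕ) : Set (Matrix (Fin n) (Fin n) ℤ) :=
  {B | (∀ i j, B i j = 0 ∨ B i j = 1) ∧ B.det = 0}

variable {n : ℕ}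

def borderedSigned (B : Matrix (Fin n) (Fin n) ℤ) : Matrix (Fin (n + 1)) (Fin (n + 1)) ℤ :=
  of fun i j => Fin.cases 1 (fun i => Fin.cases 1 (fun j => 1 - 2 * B i j) j) i

@[simp] theorem borderedSigned_zero_left (B : Matrix (Fin n) (Fin n) ℤ) (j : Fin (n + 1)) :
    borderedSigned B 0 j = 1 := rfl

@[simp] theorem borderedSigned_zero_right (B : Matrix (Fin n) (Fin n) ℤ) (i : Fin (n + 1)) :
    borderedSigned B i 0 = 1 := by
  cases i using Fin.cases <;> rfl

@[simp] theorem borderedSigned_succ_succ (B : Matrix (Fin n) (Fin n) ℤ) (i j : Fin n) :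
    borderedSigned B i.succ j.succ = 1 - 2 * B i j := rfl

theorem det_borderedSigned (B : Matrix (Fin n) (Fin n) ℤ) :
    (borderedSigned B).det = (-2) ^ n * B.det := by
  let M : Matrix (Fin (n + 1)) (Fin (n + 1)) ℤ :=
    of fun i j => Fin.cases 1 (fun i => Fin.cases 0 (fun j => -2 * B i j) j) i
  have hM : (borderedSigned B).det = M.det := by
    refine det_eq_of_forall_row_eq_smul_add_const (Fin.cases 0 fun _ => 1) 0 rfl fun i j => ?_
    cases i using Fin.cases <;> cases j using Fin.cases <;> simp [M]; ring
  have hsub : M.submatrix Fin.succ Fin.succ = (-2 : ℤ) • B := by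
    ext i j
    simp [M]
  rw [hM, det_succ_column_zero, Fin.sum_univ_succ, Fin.succAbove_zero, hsub, det_smul]
  simp [M]

def signedBorder (ε : Fin (n + 1) → ℤˣ) (δ : Fin n → ℤˣ) (B : Matrix (Fin n) (Fin n) ℤ) :
    Matrix (Fin (n + 1)) (Fin (n + 1)) ℤ :=
  diagonal (fun i => (ε i : ℤ)) * borderedSigned B *
    diagonal (fun j => ((Fin.cons 1 δ : Fin (n + 1) → ℤˣ) j : ℤ))

theorem signedBorder_apply (ε : Fin (n + 1) → ℤˣ) (δ : Fin n → ℤˣ)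
    (B : Matrix (Fin n) (Fin n) ℤ) (i j : Fin (n + 1)) :
    signedBorder ε δ B i j =
      ε i * borderedSigned B i j * ((Fin.cons 1 δ : Fin (n + 1) → ℤˣ) j : ℤ) := by
  simp [signedBorder, diagonal_mul, mul_diagonal]

theorem det_signedBorder_eq_zero_iff (ε : Fin (n + 1) → ℤˣ) (δ : Fin n → ℤˣ)
    (B : Matrix (Fin n) (Fin n) ℤ) : (signedBorder ε δ B).det = 0 ↔ B.det = 0 := by
  rw [signedBorder, det_diagonal_units_mul_mul_diagonal_units_eq_zero_iff, det_borderedSigned]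
  simp

theorem isUnit_signedBorder_apply (ε : Fin (n + 1) → ℤˣ) (δ : Fin n → ℤˣ)
    {B : Matrix (Fin n) (Fin n) ℤ} (hB : ∀ i j, B i j = 0 ∨ B i j = 1) (i j : Fin (n + 1)) :
    IsUnit (signedBorder ε δ B i j) := by
  have hbord : IsUnit (borderedSigned B i j) := by
    cases i using Fin.cases with
    | zero => simp
    | succ i =>
      cases j using Fin.cases with
      | zero => simp
      | succ j => rcases hB i j with h | h <;> simp [h]
  rw [signedBorder_apply]
  exact ((ε i).isUnit.mul hbord).mul (Units.isUnit _)

section Normalize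

variable {A : Matrix (Fin (n + 1)) (Fin (n + 1)) ℤ}

noncomputable def rowSigns (hA : ∀ i j, IsUnit (A i j)) : Fin (n + 1) → ℤˣ :=
  fun i => (hA i 0).unit

noncomputable def colSigns (hA : ∀ i j, IsUnit (A i j)) : Fin n → ℤˣ :=
  fun j => (hA 0 0).unit * (hA 0 j.succ).unit

/-- For a `±1` matrix `A`, the entry at `(i + 1, j + 1)` of the flip of `A` whose first row and
first column are all `1`. -/
def normalizedEntry (A : Matrix (Fin (n + 1)) (Fin (n + 1)) ℤ) (i j : Fin n) : ℤ :=
  A i.succ 0 * A 0 0 * A 0 j.succ * A i.succ j.succ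

def zeroOnePart (A : Matrix (Fin (n + 1)) (Fin (n + 1)) ℤ) : Matrix (Fin n) (Fin n) ℤ :=
  of fun i j => (1 - normalizedEntry A i j) / 2

theorem isUnit_normalizedEntry (hA : ∀ i j, IsUnit (A i j)) (i j : Fin n) :
    IsUnit (normalizedEntry A i j) :=
  (((hA _ _).mul (hA _ _)).mul (hA _ _)).mul (hA _ _)

theorem zeroOnePart_apply_eq_zero_or_eq_one (hA : ∀ i j, IsUnit (A i j)) (i j : Fin n) :
    zeroOnePart A i j = 0 ∨ zeroOnePart A i j = 1 := by
  rcases Int.isUnit_iff.1 (isUnit_normalizedEntry hA i j) with h | h <;> simp [zeroOnePart, h]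

theorem one_sub_two_mul_zeroOnePart (hA : ∀ i j, IsUnit (A i j)) (i j : Fin n) :
    1 - 2 * zeroOnePart A i j = normalizedEntry A i j := by
  rcases Int.isUnit_iff.1 (isUnit_normalizedEntry hA i j) with h | h <;> simp [zeroOnePart, h]

theorem signedBorder_rowSigns_colSigns_zeroOnePart (hA : ∀ i j, IsUnit (A i j)) :
    signedBorder (rowSigns hA) (colSigns hA) (zeroOnePart A) = A := by
  have hsq : ∀ i j, A i j ^ 2 = 1 := fun i j => Int.isUnit_sq (hA i j)
  ext i j
  rw [signedBorder_apply]
  cases i using Fin.cases with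
  | zero =>
    cases j using Fin.cases with
    | zero => simp [rowSigns]
    | succ j =>
      simp [rowSigns, colSigns]
      linear_combination A 0 j.succ * hsq 0 0
  | succ i =>
    cases j using Fin.cases with
    | zero => simp [rowSigns]
    | succ j =>
      simp [rowSigns, colSigns, one_sub_two_mul_zeroOnePart hA, normalizedEntry]
      linear_combination (A 0 0 ^ 2 * A 0 j.succ ^ 2 * A i.succ j.succ) * hsq i.succ 0 +
        (A 0 j.succ ^ 2 * A i.succ j.succ) * hsq 0 0 + A i.succ j.succ * hsq 0 j.succ

end Normalize

section Recover

variable (ε : Fin (n + 1) → ℤˣ) (δ : Fin n → ℤˣ)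

theorem rowSigns_signedBorder {B : Matrix (Fin n) (Fin n) ℤ}
    (hB : ∀ i j, B i j = 0 ∨ B i j = 1) :
    rowSigns (isUnit_signedBorder_apply ε δ hB) = ε := by
  ext i
  simp [rowSigns, signedBorder_apply]

theorem colSigns_signedBorder {B : Matrix (Fin n) (Fin n) ℤ}
    (hB : ∀ i j, B i j = 0 ∨ B i j = 1) :
    colSigns (isUnit_signedBorder_apply ε δ hB) = δ := by
  ext j
  simp [colSigns, signedBorder_apply, ← mul_assoc, Int.units_coe_mul_self]

theorem normalizedEntry_signedBorder (B : Matrix (Fin n) (Fin n) ℤ) (i j : Fin n) :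
    normalizedEntry (signedBorder ε δ B) i j = 1 - 2 * B i j := by
  have hsq : ∀ u : ℤˣ, (u : ℤ) ^ 2 = 1 := fun u => by rw [sq, Int.units_coe_mul_self]
  simp [normalizedEntry, signedBorder_apply]
  linear_combination (1 - 2 * B i j) * ((ε 0 : ℤ) ^ 2 * (δ j : ℤ) ^ 2 * hsq (ε i.succ) +
    (δ j : ℤ) ^ 2 * hsq (ε 0) + hsq (δ j))

theorem zeroOnePart_signedBorder (B : Matrix (Fin n) (Fin n) ℤ) :
    zeroOnePart (signedBorder ε δ B) = B := by
  ext i j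
  simp [zeroOnePart, normalizedEntry_signedBorder]

end Recover

noncomputable def signedBorderEquiv (n : ℕ) :
    (Fin (n + 1) → ℤˣ) × (Fin n → ℤˣ) × singularZeroOneMatrices n ≃
      singularSignMatrices (n + 1) where
  toFun := fun ⟨ε, δ, B, hB, hdet⟩ =>
    ⟨signedBorder ε δ B, fun i j => Int.isUnit_iff.1 (isUnit_signedBorder_apply ε δ hB i j),
      (det_signedBorder_eq_zero_iff ε δ B).2 hdet⟩
  invFun := fun ⟨A, hA, hdet⟩ =>
    have hA' : ∀ i j, IsUnit (A i j) := fun i j => Int.isUnit_iff.2 (hA i j)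
    (rowSigns hA', colSigns hA', ⟨zeroOnePart A, zeroOnePart_apply_eq_zero_or_eq_one hA',
      (det_signedBorder_eq_zero_iff _ _ _).1 <| by
        rwa [signedBorder_rowSigns_colSigns_zeroOnePart hA']⟩)
  left_inv := fun ⟨ε, δ, B, hB, _⟩ => by
    simp only [rowSigns_signedBorder ε δ hB, colSigns_signedBorder ε δ hB,
      zeroOnePart_signedBorder]
  right_inv := fun ⟨A, hA, _⟩ => Subtype.ext (signedBorder_rowSigns_colSigns_zeroOnePart _)

theorem ncard_singularSignMatrices_succ (n : ℕ) :
    (singularSignMatrices (n + 1)).ncard =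
      2 ^ (n + 1) * (2 ^ n * (singularZeroOneMatrices n).ncard) := by
  rw [← Nat.card_coe_set_eq, ← Nat.card_congr (signedBorderEquiv n)]
  simp [Nat.card_eq_fintype_card]

end SignMatrix

/-- **The density of singular `±1` matrices equals the density of singular `{0,1}` matrices
one size smaller.** For every `n ≥ 2` (encoded as `n = m + 2`):
`2^{(n−1)²} · |{A ∈ {±1}^{n×n} : det A = 0}| = 2^{n²} · |{B ∈ {0,1}^{(n−1)×(n−1)} : det B = 0}|`,
determinants taken over `ℤ`. -/
theorem singular_pm_density_eq_singular_01_density (m : ℕ) :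
    2 ^ ((m + 1) ^ 2) *
        Set.ncard {A : Matrix (Fin (m + 2)) (Fin (m + 2)) ℤ |
          (∀ i j, A i j = 1 ∨ A i j = -1) ∧ A.det = 0} =
      2 ^ ((m + 2) ^ 2) *
        Set.ncard {B : Matrix (Fin (m + 1)) (Fin (m + 1)) ℤ |
          (∀ i j, B i j = 0 ∨ B i j = 1) ∧ B.det = 0} := by
  change 2 ^ ((m + 1) ^ 2) * (SignMatrix.singularSignMatrices (m + 1 + 1)).ncard =
    2 ^ ((m + 2) ^ 2) * (SignMatrix.singularZeroOneMatrices (m + 1)).ncard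
  rw [SignMatrix.ncard_singularSignMatrices_succ]
  ring
end
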